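/- arXiv:2410.13767 — 4 statements merged into one kernel-verified Lean document; each statement's English description precedes it below -/
import Mathlib

section
/- Suppose V(s) ≥ 1 for all s and the drift condition Σ_{s'} P̃η(s,s') V(s') ≤ b V(s) + d·1_C(s) holds for all s ∈ S, where b ∈ (0,1), d ≥ 0, and C ⊆ S (with 1_C the indicator of C). Then the V-norm of the kernel difference satisfies ‖P̃θ − P̃η‖_V := sup_s (1/V(s)) Σ_{s'} |P̃θ(s,s') − P̃η(s,s')| V(s') ≤ ‖r−1‖∞ · (b + d). -/
open Finset

/-! Writing `πθ − πη = (r − 1) πη` action by action gives the pointwise domination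
`|P̃θ(s,s') − P̃η(s,s')| ≤ (∑_f |r(f|s) − 1|) · P̃η(s,s')`, so the `V`-weighted row sum of the
difference is at most `‖r − 1‖∞ · (P̃η V)(s)`, and the drift condition bounds `(P̃η V)(s)`
by `b V(s) + d ≤ (b + d) V(s)` because `V ≥ 1`. -/

theorem abs_sub_eq_abs_div_sub_one_mul {x y : ℝ} (hy : 0 < y) : |x - y| = |x / y - 1| * y := by
  rw [div_sub_one hy.ne', abs_div, abs_of_pos hy, div_mul_cancel₀ _ hy.ne']

theorem abs_sum_mul_sub_sum_mul_le {F : Type*} (A : Finset F) {α β q : F → ℝ}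
    (hβ : ∀ f ∈ A, 0 < β f) (hq : ∀ f ∈ A, 0 ≤ q f) :
    |∑ f ∈ A, α f * q f - ∑ f ∈ A, β f * q f|
      ≤ (∑ f ∈ A, |α f / β f - 1|) * ∑ f ∈ A, β f * q f := by
  calc |∑ f ∈ A, α f * q f - ∑ f ∈ A, β f * q f|
      = |∑ f ∈ A, (α f - β f) * q f| := by simp only [sub_mul, sum_sub_distrib]
    _ ≤ ∑ f ∈ A, |(α f - β f) * q f| := abs_sum_le_sum_abs _ _
    _ = ∑ f ∈ A, |α f / β f - 1| * (β f * q f) := by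
        refine sum_congr rfl fun f hf => ?_
        rw [abs_mul, abs_of_nonneg (hq f hf), abs_sub_eq_abs_div_sub_one_mul (hβ f hf), mul_assoc]
    _ ≤ ∑ f ∈ A, (∑ g ∈ A, |α g / β g - 1|) * (β f * q f) := by
        refine sum_le_sum fun f hf => mul_le_mul_of_nonneg_right ?_ ?_
        · exact single_le_sum (f := fun g => |α g / β g - 1|) (fun g _ => abs_nonneg _) hf
        · exact mul_nonneg (hβ f hf).le (hq f hf)
    _ = _ := (mul_sum _ _ _).symm

theorem mul_indicator_one_le_mul {S : Type*} {C : Set S} {s : S} {d v : ℝ}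
    (hd : 0 ≤ d) (hv : 1 ≤ v) : d * C.indicator (fun _ => (1 : ℝ)) s ≤ d * v := by
  refine mul_le_mul_of_nonneg_left ?_ hd
  by_cases hs : s ∈ C <;> simp [hs] <;> linarith

theorem ENNReal.tsum_ofReal_le_ofReal_mul_tsum {ι : Type*} {g h : ι → ℝ} {M : ℝ}
    (hg : ∀ i, 0 ≤ g i) (hgh : ∀ i, g i ≤ M * h i) (hh : Summable h) :
    ∑' i, ENNReal.ofReal (g i) ≤ ENNReal.ofReal (M * ∑' i, h i) := by
  have hMh : Summable fun i => M * h i := hh.mul_left M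
  have hg_sum : Summable g := hMh.of_nonneg_of_le hg hgh
  rw [← ENNReal.ofReal_tsum_of_nonneg hg hg_sum, ← tsum_mul_left]
  exact ENNReal.ofReal_le_ofReal (hg_sum.tsum_le_tsum hgh hMh)

theorem stmt_6_general {S F : Type*}
    (A : S → Finset F)
    (πθ πη : S → F → ℝ)
    (hπη0 : ∀ s, ∀ f ∈ A s, 0 < πη s f)
    (r : S → F → ℝ) (hr : ∀ s f, r s f = πθ s f / πη s f)
    (p : S → F → S → ℝ) (hp0 : ∀ s f s', 0 ≤ p s f s')
    (Pθ Pη : S → S → ℝ)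
    (hPθ : ∀ s s', Pθ s s' = ∑ f ∈ A s, πθ s f * p s f s')
    (hPη : ∀ s s', Pη s s' = ∑ f ∈ A s, πη s f * p s f s')
    (V : S → ℝ) (hV : ∀ s, 1 ≤ V s)
    (b d : ℝ) (hd : 0 ≤ d) (C : Set S)
    (hdriftSummable : ∀ s, Summable fun s' => Pη s s' * V s')
    (hdrift : ∀ s, ∑' s', Pη s s' * V s' ≤ b * V s + d * C.indicator (fun _ => (1 : ℝ)) s) :
    (⨆ s, ∑' s', ENNReal.ofReal (|Pθ s s' - Pη s s'| * V s' / V s))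
      ≤ (⨆ s, ENNReal.ofReal (∑ f ∈ A s, |r s f - 1|)) * ENNReal.ofReal (b + d) := by
  refine iSup_le fun s => ?_
  have hV0 : ∀ t, 0 ≤ V t := fun t => zero_le_one.trans (hV t)
  set M := ∑ f ∈ A s, |r s f - 1|
  have hM0 : 0 ≤ M := sum_nonneg fun f _ => abs_nonneg _
  have hdominated : ∀ s', |Pθ s s' - Pη s s'| * V s' / V s ≤ M * (Pη s s' * V s' / V s) := by
    intro s'
    have h := abs_sum_mul_sub_sum_mul_le (A s) (α := πθ s) (hπη0 s) (fun f _ => hp0 s f s')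
    simp only [← hPθ, ← hPη, ← hr] at h
    rw [mul_div_assoc', ← mul_assoc]
    exact div_le_div_of_nonneg_right (mul_le_mul_of_nonneg_right h (hV0 s')) (hV0 s)
  have hdrift_le : ∑' s', Pη s s' * V s' / V s ≤ b + d := by
    rw [tsum_div_const, div_le_iff₀ (zero_lt_one.trans_le (hV s)), add_mul]
    linarith [hdrift s, mul_indicator_one_le_mul (C := C) (s := s) hd (hV s)]
  calc (∑' s', ENNReal.ofReal (|Pθ s s' - Pη s s'| * V s' / V s))
      ≤ ENNReal.ofReal (M * ∑' s', Pη s s' * V s' / V s) :=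
        ENNReal.tsum_ofReal_le_ofReal_mul_tsum
          (fun s' => div_nonneg (mul_nonneg (abs_nonneg _) (hV0 s')) (hV0 s)) hdominated
          ((hdriftSummable s).div_const _)
    _ ≤ ENNReal.ofReal M * ENNReal.ofReal (b + d) := by
        rw [← ENNReal.ofReal_mul hM0]
        exact ENNReal.ofReal_le_ofReal (mul_le_mul_of_nonneg_left hdrift_le hM0)
    _ ≤ _ := by gcongr; exact le_iSup (fun t => ENNReal.ofReal (∑ f ∈ A t, |r t f - 1|)) s

/-- Under the drift condition `∑ s', P̃η(s,s') V s' ≤ b V s + d·1_C s` with `b ∈ (0,1)`,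
`d ≥ 0` and `V ≥ 1`, the `V`-norm of the day-kernel difference satisfies
`‖P̃θ − P̃η‖_V ≤ ‖r − 1‖_∞ · (b + d)`, where `r(f|s) = πθ(f|s)/πη(f|s)` and
`‖r − 1‖_∞ = sup_s ∑_{f ∈ A s} |r(f|s) − 1|` (the sups are evaluated in `ℝ≥0∞`). -/
theorem stmt_6 {S F : Type*} [Countable S]
    (A : S → Finset F) (hA : ∀ s, (A s).Nonempty)
    (πθ πη : S → F → ℝ)
    (hπθ0 : ∀ s, ∀ f ∈ A s, 0 ≤ πθ s f) (hπθ1 : ∀ s, ∑ f ∈ A s, πθ s f = 1)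
    (hπη0 : ∀ s, ∀ f ∈ A s, 0 < πη s f) (hπη1 : ∀ s, ∑ f ∈ A s, πη s f = 1)
    (r : S → F → ℝ) (hr : ∀ s f, r s f = πθ s f / πη s f)
    (p : S → F → S → ℝ) (hp0 : ∀ s f s', 0 ≤ p s f s') (hp1 : ∀ s f, ∑' s', p s f s' = 1)
    (Pθ Pη : S → S → ℝ)
    (hPθ : ∀ s s', Pθ s s' = ∑ f ∈ A s, πθ s f * p s f s')
    (hPη : ∀ s s', Pη s s' = ∑ f ∈ A s, πη s f * p s f s')
    (V : S → ℝ) (hV : ∀ s, 1 ≤ V s)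
    (b d : ℝ) (hb0 : 0 < b) (hb1 : b < 1) (hd : 0 ≤ d) (C : Set S)
    (hdriftSummable : ∀ s, Summable fun s' => Pη s s' * V s')
    (hdrift : ∀ s, ∑' s', Pη s s' * V s' ≤ b * V s + d * C.indicator (fun _ => (1 : ℝ)) s) :
    (⨆ s, ∑' s', ENNReal.ofReal (|Pθ s s' - Pη s s'| * V s' / V s))
      ≤ (⨆ s, ENNReal.ofReal (∑ f ∈ A s, |r s f - 1|)) * ENNReal.ofReal (b + d) :=
  stmt_6_general A πθ πη hπη0 r hr p hp0 Pθ Pη hPθ hPη V hV b d hd C hdriftSummable hdrift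
end

section
/- The objective N̂₁ is differentiable on ℝ³ and its partial derivatives satisfy ∂N̂₁/∂θ₀(θ) = ∇₀(θ) and ∂N̂₁/∂θ_k(θ) = ∇₀(θ)·x_k for k = 1, 2, where ∇₀(θ) = Σ_{f=0}^q binom(q,f) p^f (1−p)^{q−f} (f − qp) Â(f) = q p (1−p) (2 β̂₃ (1−μ)² (2(q−1)p + x₂ − x₁ + 1) + B − C), with p = p(θ). (Lemma 2: closed-form policy gradient for the symmetric two-pool midnight MDP under the logistic randomized atomic policy.) -/
/-!
Write `N̂₁(θ) = 𝔼[Â(X)]` with `X ∼ Binomial(q, p(θ))`. The logistic link satisfies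
`p' = p (1 - p)`, so the chain rule turns the derivative of each binomial weight
`p^f (1 - p)^(q - f)` into that weight times `f - q p`: every partial derivative of `N̂₁` is
`Cov(X, Â(X))` times the coefficient of `θ_k` in the logit. The binomial Stein identity
`Cov(X, g X) = q p (1 - p) 𝔼[g(Y + 1) - g(Y)]`, `Y ∼ Binomial(q - 1, p)`, then gives the closed
form, because the difference `Â(f + 1) - Â(f)` is affine in `f`.
-/

open Finset Real

noncomputable def binomialMean (n : ℕ) (g : ℕ → ℝ) (p : ℝ) : ℝ :=
  ∑ k ∈ range (n + 1), (n.choose k : ℝ) * p ^ k * (1 - p) ^ (n - k) * g k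

/-- `Cov(X, g X)` for `X ∼ Binomial(n, p)`, using `𝔼[X] = n p`. -/
noncomputable def binomialCov (n : ℕ) (g : ℕ → ℝ) (p : ℝ) : ℝ :=
  ∑ k ∈ range (n + 1), (n.choose k : ℝ) * p ^ k * (1 - p) ^ (n - k) * ((k : ℝ) - n * p) * g k

section Binomial

variable (n : ℕ) (p : ℝ)

lemma binomialMean_linear (a b : ℝ) (g h : ℕ → ℝ) :
    binomialMean n (fun k => a * g k + b * h k) p
      = a * binomialMean n g p + b * binomialMean n h p := by
  simp only [binomialMean, mul_sum, ← sum_add_distrib]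
  exact sum_congr rfl fun k _ => by ring

lemma binomialMean_one : binomialMean n (fun _ => 1) p = 1 := by
  simpa [binomialMean, bernsteinPolynomial, Polynomial.eval_finsetSum] using
    congrArg (Polynomial.eval p) (bernsteinPolynomial.sum ℝ n)

lemma binomialMean_natCast : binomialMean n (fun k => k) p = n * p := by
  have h := congrArg (Polynomial.eval p) (bernsteinPolynomial.sum_smul ℝ n)
  simp only [Polynomial.eval_finsetSum, bernsteinPolynomial, Polynomial.eval_mul,
    Polynomial.eval_pow, Polynomial.eval_natCast, Polynomial.eval_sub, Polynomial.eval_one,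
    Polynomial.eval_X, nsmul_eq_mul] at h
  rw [binomialMean, ← h]
  exact sum_congr rfl fun k _ => by ring

lemma binomialMean_affine (a b : ℝ) :
    binomialMean n (fun k => a + b * k) p = a + b * (n * p) := by
  have h := binomialMean_linear n p a b (fun _ => 1) (fun k => k)
  simp only [mul_one, binomialMean_one, binomialMean_natCast] at h
  exact h

lemma binomialMean_succ_natCast_mul (g : ℕ → ℝ) :
    binomialMean (n + 1) (fun k => k * g k) p
      = (n + 1) * p * binomialMean n (fun k => g (k + 1)) p := by
  rw [binomialMean, sum_range_succ', binomialMean, mul_sum]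
  simp only [Nat.cast_zero, zero_mul, mul_zero, add_zero, Nat.add_sub_add_right]
  refine sum_congr rfl fun k _ => ?_
  have h := congrArg (Nat.cast (R := ℝ)) (Nat.add_one_mul_choose_eq n k)
  push_cast at h ⊢
  linear_combination (p * p ^ k * (1 - p) ^ (n - k) * g (k + 1)) * h.symm

lemma binomialMean_succ_sub_mul (g : ℕ → ℝ) :
    binomialMean (n + 1) (fun k => ((n : ℝ) + 1 - k) * g k) p
      = (n + 1) * (1 - p) * binomialMean n g p := by
  rw [binomialMean, sum_range_succ, binomialMean, mul_sum]
  simp only [Nat.cast_add, Nat.cast_one, sub_self, zero_mul, mul_zero, add_zero]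
  refine sum_congr rfl fun k hk => ?_
  have hkn : k ≤ n := mem_range_succ_iff.mp hk
  have h := congrArg (Nat.cast (R := ℝ)) (Nat.choose_mul_succ_eq n k)
  rw [Nat.cast_mul, Nat.cast_mul, Nat.cast_sub (by omega)] at h
  push_cast at h
  rw [show n + 1 - k = n - k + 1 by omega, pow_succ]
  linear_combination (p ^ k * (1 - p) ^ (n - k) * (1 - p) * g k) * h.symm

lemma binomialCov_eq_binomialMean (g : ℕ → ℝ) :
    binomialCov n g p = binomialMean n (fun k => ((k : ℝ) - n * p) * g k) p :=
  sum_congr rfl fun k _ => by ring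

lemma binomialCov_succ (g : ℕ → ℝ) :
    binomialCov (n + 1) g p
      = (n + 1) * p * (1 - p) * binomialMean n (fun k => g (k + 1) - g k) p := by
  have hsplit : (fun k : ℕ => ((k : ℝ) - ↑(n + 1) * p) * g k)
      = fun k => (1 - p) * (k * g k) + (-p) * (((n : ℝ) + 1 - k) * g k) := by
    funext k; push_cast; ring
  have hΔ := binomialMean_linear n p 1 (-1) (fun k => g (k + 1)) g
  simp only [one_mul, neg_one_mul, ← sub_eq_add_neg] at hΔ
  rw [binomialCov_eq_binomialMean, hsplit, binomialMean_linear, binomialMean_succ_natCast_mul,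
    binomialMean_succ_sub_mul, hΔ]
  ring

end Binomial

lemma natCast_mul_pow_pred_mul {R : Type*} [CommSemiring R] (k : ℕ) (x : R) :
    (k : R) * x ^ (k - 1) * x = k * x ^ k := by
  rcases k.eq_zero_or_pos with rfl | hk
  · simp
  · rw [mul_assoc, pow_sub_one_mul hk.ne']

lemma hasDerivAt_pow_mul_one_sub_pow {u : ℝ → ℝ} {t m : ℝ} {k n : ℕ} (hk : k ≤ n)
    (hu : HasDerivAt u (u t * (1 - u t) * m) t) :
    HasDerivAt (fun s => u s ^ k * (1 - u s) ^ (n - k))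
      (u t ^ k * (1 - u t) ^ (n - k) * ((k : ℝ) - n * u t) * m) t := by
  refine ((hu.pow k).mul ((hu.const_sub 1).pow (n - k))).congr_deriv ?_
  have hk' := natCast_mul_pow_pred_mul k (u t)
  have hnk := natCast_mul_pow_pred_mul (n - k) (1 - u t)
  rw [Nat.cast_sub hk] at hnk ⊢
  simp only [Pi.pow_apply]
  linear_combination (m * (1 - u t) * (1 - u t) ^ (n - k)) * hk' - (m * u t * u t ^ k) * hnk

lemma HasDerivAt.binomialMean_comp {u : ℝ → ℝ} {t m : ℝ} (n : ℕ) (g : ℕ → ℝ)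
    (hu : HasDerivAt u (u t * (1 - u t) * m) t) :
    HasDerivAt (fun s => binomialMean n g (u s)) (binomialCov n g (u t) * m) t := by
  simp only [binomialMean, binomialCov, sum_mul]
  refine HasDerivAt.fun_sum fun k hk => ?_
  have h := ((hasDerivAt_pow_mul_one_sub_pow (mem_range_succ_iff.mp hk) hu).const_mul
    (n.choose k : ℝ)).mul_const (g k)
  simp only [← mul_assoc] at h
  exact h.congr_deriv (by ring)

lemma differentiable_binomialMean (n : ℕ) (g : ℕ → ℝ) : Differentiable ℝ (binomialMean n g) := by
  unfold binomialMean
  fun_prop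

lemma one_sub_one_div_one_add_exp (x : ℝ) : 1 - 1 / (1 + exp x) = sigmoid x := by
  have h := sigmoid_neg (-x)
  rw [neg_neg] at h
  rw [h, sigmoid_def, neg_neg, one_div]

theorem stmt_11_general (q : ℕ) (hq : 1 ≤ q) (x₁ x₂ B C β₃ c μ : ℝ)
    (p : ℝ × ℝ × ℝ → ℝ)
    (hp : ∀ θ : ℝ × ℝ × ℝ,
      p θ = 1 - 1 / (1 + Real.exp (θ.2.1 * x₁ + θ.2.2 * x₂ + θ.1)))
    (Adv : ℕ → ℝ)
    (hAdv : ∀ f : ℕ, Adv f = (B - C) * f +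
      β₃ * (1 - μ) ^ 2 * (2 * (f : ℝ) ^ 2 - 2 * (x₁ - x₂) * f) + c)
    (N₁ : ℝ × ℝ × ℝ → ℝ)
    (hN₁ : ∀ θ, N₁ θ = ∑ f ∈ Finset.range (q + 1),
      (q.choose f : ℝ) * p θ ^ f * (1 - p θ) ^ (q - f) * Adv f)
    (grad₀ : ℝ × ℝ × ℝ → ℝ)
    (hgrad₀ : ∀ θ, grad₀ θ = ∑ f ∈ Finset.range (q + 1),
      (q.choose f : ℝ) * p θ ^ f * (1 - p θ) ^ (q - f) * ((f : ℝ) - q * p θ) * Adv f) :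
    Differentiable ℝ N₁
    ∧ (∀ θ, grad₀ θ = q * p θ * (1 - p θ) *
        (2 * β₃ * (1 - μ) ^ 2 * (2 * ((q : ℝ) - 1) * p θ + x₂ - x₁ + 1) + B - C))
    ∧ (∀ θ₀ θ₁ θ₂ : ℝ,
        HasDerivAt (fun t => N₁ (t, θ₁, θ₂)) (grad₀ (θ₀, θ₁, θ₂)) θ₀
        ∧ HasDerivAt (fun t => N₁ (θ₀, t, θ₂)) (grad₀ (θ₀, θ₁, θ₂) * x₁) θ₁
        ∧ HasDerivAt (fun t => N₁ (θ₀, θ₁, t)) (grad₀ (θ₀, θ₁, θ₂) * x₂) θ₂) := by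
  set z : ℝ × ℝ × ℝ → ℝ := fun θ => θ.2.1 * x₁ + θ.2.2 * x₂ + θ.1
  have hp_eq : p = sigmoid ∘ z := funext fun θ => (hp θ).trans (one_sub_one_div_one_add_exp _)
  have hN : N₁ = binomialMean q Adv ∘ p := funext hN₁
  have hG : ∀ θ, grad₀ θ = binomialCov q Adv (p θ) := hgrad₀
  have along (v : ℝ → ℝ × ℝ × ℝ) (m t : ℝ) (hv : HasDerivAt (z ∘ v) m t) :
      HasDerivAt (fun s => N₁ (v s)) (grad₀ (v t) * m) t := by
    rw [hN, hG]
    refine HasDerivAt.binomialMean_comp q Adv ?_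
    rw [hp_eq]
    exact (hasDerivAt_sigmoid _).comp t hv
  refine ⟨?_, fun θ => ?_, fun θ₀ θ₁ θ₂ => ⟨?_, ?_, ?_⟩⟩
  · rw [hN, hp_eq]
    exact (differentiable_binomialMean q Adv).comp (differentiable_sigmoid.comp (by fun_prop))
  · obtain ⟨n, rfl⟩ := Nat.exists_eq_add_of_le' hq
    have hΔ : (fun k => Adv (k + 1) - Adv k) = fun k : ℕ =>
        (B - C + 2 * β₃ * (1 - μ) ^ 2 * (1 - x₁ + x₂)) + 4 * β₃ * (1 - μ) ^ 2 * k :=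
      funext fun k => by simp only [hAdv]; push_cast; ring
    rw [hG, binomialCov_succ, hΔ, binomialMean_affine]
    push_cast
    ring
  · exact (along (fun t => (t, θ₁, θ₂)) 1 θ₀
      ((hasDerivAt_id θ₀).const_add (θ₁ * x₁ + θ₂ * x₂))).congr_deriv (mul_one _)
  · exact along (fun t => (θ₀, t, θ₂)) x₁ θ₁
      (((hasDerivAt_mul_const x₁).add_const (θ₂ * x₂)).add_const θ₀)
  · exact along (fun t => (θ₀, θ₁, t)) x₂ θ₂
      (((hasDerivAt_mul_const x₂).const_add (θ₁ * x₁)).add_const θ₀)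

/-- **Lemma 2 (closed-form policy gradient).** In the symmetric two-pool midnight MDP with
the logistic randomized atomic policy `p(θ) = 1 − 1/(1 + exp(θ₁x₁ + θ₂x₂ + θ₀))`, the
state-restricted PPO surrogate objective
`N̂₁(θ) = ∑_{f=0}^q binom(q,f) p(θ)^f (1−p(θ))^{q−f} Â(f)` is differentiable on `ℝ³`, its
partial derivatives satisfy `∂N̂₁/∂θ₀ = ∇₀(θ)` and `∂N̂₁/∂θ_k = ∇₀(θ)·x_k` for `k = 1,2`,
and `∇₀(θ) = ∑_f binom(q,f) p^f (1−p)^{q−f} (f − qp) Â(f)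
  = q p (1−p) (2 β̂₃ (1−μ)² (2(q−1)p + x₂ − x₁ + 1) + B − C)`. -/
theorem stmt_11 (q : ℕ) (hq : 1 ≤ q) (x₁ x₂ B C β₃ c μ : ℝ)
    (hμ0 : 0 ≤ μ) (hμ1 : μ < 1)
    (p : ℝ × ℝ × ℝ → ℝ)
    (hp : ∀ θ : ℝ × ℝ × ℝ,
      p θ = 1 - 1 / (1 + Real.exp (θ.2.1 * x₁ + θ.2.2 * x₂ + θ.1)))
    (Adv : ℕ → ℝ)
    (hAdv : ∀ f : ℕ, Adv f = (B - C) * f +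
      β₃ * (1 - μ) ^ 2 * (2 * (f : ℝ) ^ 2 - 2 * (x₁ - x₂) * f) + c)
    (N₁ : ℝ × ℝ × ℝ → ℝ)
    (hN₁ : ∀ θ, N₁ θ = ∑ f ∈ Finset.range (q + 1),
      (q.choose f : ℝ) * p θ ^ f * (1 - p θ) ^ (q - f) * Adv f)
    (grad₀ : ℝ × ℝ × ℝ → ℝ)
    (hgrad₀ : ∀ θ, grad₀ θ = ∑ f ∈ Finset.range (q + 1),
      (q.choose f : ℝ) * p θ ^ f * (1 - p θ) ^ (q - f) * ((f : ℝ) - q * p θ) * Adv f) :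
    Differentiable ℝ N₁
    ∧ (∀ θ, grad₀ θ = q * p θ * (1 - p θ) *
        (2 * β₃ * (1 - μ) ^ 2 * (2 * ((q : ℝ) - 1) * p θ + x₂ - x₁ + 1) + B - C))
    ∧ (∀ θ₀ θ₁ θ₂ : ℝ,
        HasDerivAt (fun t => N₁ (t, θ₁, θ₂)) (grad₀ (θ₀, θ₁, θ₂)) θ₀
        ∧ HasDerivAt (fun t => N₁ (θ₀, t, θ₂)) (grad₀ (θ₀, θ₁, θ₂) * x₁) θ₁
        ∧ HasDerivAt (fun t => N₁ (θ₀, θ₁, t)) (grad₀ (θ₀, θ₁, θ₂) * x₂) θ₂) :=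
  stmt_11_general q hq x₁ x₂ B C β₃ c μ p hp Adv hAdv N₁ hN₁ grad₀ hgrad₀
end

section
/- For every integer f with 0 ≤ f ≤ x₁: G(f) − G(0) = (B−C)f + β̂₃(1−μ)²(2f² − 2(x₁−x₂)f). In other words, the approximate advantage function of the two-pool midnight model depends on the overflow quantity f only through the closed-form expression (B−C)f + β̂₃(1−μ)²(2f² − 2(x₁−x₂)f), up to an additive constant independent of f. -/
/-!
Each pool ends the day at `c + A - D` with `A` Poisson and `D` an independent binomial, so its
first two moments follow from the first two factorial moments of the Poisson and binomial laws:
the mean is `c + λ - nμ` and the variance `λ + nμ(1 - μ)`. Since `v̂` is linear in the first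
and second moments of the two pools, `G(f)` is an explicit quadratic in `f`; in `G(f) - G(0)` the
`λ`-terms and the `β̂₁`-terms cancel, leaving the stated expression.
-/

open MeasureTheory ProbabilityTheory Finset Nat

theorem hasSum_descFactorial_mul_pow_div_factorial (x : ℝ) (k : ℕ) :
    HasSum (fun n : ℕ => (n.descFactorial k : ℝ) * (x ^ n / n !)) (x ^ k * Real.exp x) := by
  refine (hasSum_nat_add_iff' k).mp ?_
  have hvanish : ∑ i ∈ range k, (i.descFactorial k : ℝ) * (x ^ i / i !) = 0 :=
    sum_eq_zero fun i hi => by simp [descFactorial_eq_zero_iff_lt.mpr (mem_range.mp hi)]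
  rw [hvanish, sub_zero]
  have hexp : HasSum (fun n : ℕ => x ^ n / n !) (Real.exp x) := by
    simpa [Real.exp_eq_exp_ℝ] using NormedSpace.expSeries_div_hasSum_exp x
  refine (hexp.mul_left (x ^ k)).congr_fun fun n => ?_
  have hfac : ((n + k) ! : ℝ) = n ! * (n + k).descFactorial k := by
    rw [← Nat.cast_mul, ← factorial_mul_descFactorial (Nat.le_add_left k n), Nat.add_sub_cancel]
  rw [hfac, pow_add]
  have hdesc : ((n + k).descFactorial k : ℝ) ≠ 0 := by
    exact_mod_cast (descFactorial_pos.mpr (Nat.le_add_left k n)).ne'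
  field_simp

theorem sum_descFactorial_mul_choose_mul_pow {R : Type*} [CommSemiring R] (p q : R) (n j : ℕ) :
    ∑ k ∈ range (n + 1), (k.descFactorial j : R) * (n.choose k * p ^ k * q ^ (n - k))
      = n.descFactorial j * p ^ j * (p + q) ^ (n - j) := by
  rcases lt_or_ge n j with hnj | hjn
  · rw [descFactorial_eq_zero_iff_lt.mpr hnj, Nat.cast_zero, zero_mul, zero_mul]
    exact sum_eq_zero fun k hk => by
      simp [descFactorial_eq_zero_iff_lt.mpr (lt_of_le_of_lt (mem_range_succ_iff.mp hk) hnj)]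
  obtain ⟨m, rfl⟩ := Nat.exists_eq_add_of_le' hjn
  rw [show m + j + 1 = j + (m + 1) by ring, sum_range_add, Nat.add_sub_cancel, add_pow, mul_sum]
  have hvanish : ∑ i ∈ range j,
      (i.descFactorial j : R) * ((m + j).choose i * p ^ i * q ^ (m + j - i)) = 0 :=
    sum_eq_zero fun i hi => by simp [descFactorial_eq_zero_iff_lt.mpr (mem_range.mp hi)]
  rw [hvanish, zero_add]
  refine sum_congr rfl fun i _ => ?_
  have hchoose : (j + i).descFactorial j * (m + j).choose (j + i)
      = (m + j).descFactorial j * m.choose i := by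
    rw [descFactorial_eq_factorial_mul_choose, descFactorial_eq_factorial_mul_choose, mul_assoc,
      mul_comm ((j + i).choose j), choose_mul (Nat.le_add_right j i), mul_assoc]
    simp
  rw [show m + j - (j + i) = m - i by omega, pow_add]
  calc ((j + i).descFactorial j : R) * ((m + j).choose (j + i) * (p ^ j * p ^ i) * q ^ (m - i))
      = (((j + i).descFactorial j * (m + j).choose (j + i) : ℕ) : R)
          * (p ^ j * p ^ i * q ^ (m - i)) := by
        push_cast; ring
    _ = _ := by rw [hchoose]; push_cast; ring

section DiscreteLaw

variable {Ω : Type*} [MeasurableSpace Ω] {P : Measure Ω} [IsFiniteMeasure P] {X : Ω → ℕ}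
  {g : ℕ → ℝ} {s : ℝ}

theorem integrable_comp_of_hasSum (hX : Measurable X) (hg : 0 ≤ g)
    (h : HasSum (fun n => g n * P.real {ω | X ω = n}) s) :
    Integrable (fun ω => g (X ω)) P := by
  change Integrable (g ∘ X) P
  rw [← integrable_map_measure measurable_from_top.aestronglyMeasurable hX.aemeasurable,
    ← Measure.sum_smul_dirac (P.map X), integrable_sum_dirac_iff fun _ => measure_ne_top _ _]
  refine h.summable.congr fun n => ?_
  rw [Real.norm_of_nonneg (hg n), mul_comm, ← measureReal_def,
    map_measureReal_apply hX (measurableSet_singleton n)]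
  rfl

theorem integral_comp_of_hasSum (hX : Measurable X) (hg : 0 ≤ g)
    (h : HasSum (fun n => g n * P.real {ω | X ω = n}) s) :
    ∫ ω, g (X ω) ∂P = s := by
  have hmap := (integrable_map_measure (measurable_from_top (f := g)).aestronglyMeasurable
    hX.aemeasurable).mpr (integrable_comp_of_hasSum hX hg h)
  rw [← integral_map hX.aemeasurable (measurable_from_top (f := g)).aestronglyMeasurable,
    integral_countable hmap, ← h.tsum_eq]
  refine tsum_congr fun n => ?_
  rw [map_measureReal_apply hX (measurableSet_singleton n), smul_eq_mul, mul_comm]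
  rfl

end DiscreteLaw

structure HasFirstTwoMoments {Ω : Type*} [MeasurableSpace Ω] (Y : Ω → ℝ) (P : Measure Ω)
    (m s : ℝ) : Prop where
  integrable : Integrable Y P
  integrable_sq : Integrable (fun ω => Y ω ^ 2) P
  integral_eq : ∫ ω, Y ω ∂P = m
  integral_sq_eq : ∫ ω, Y ω ^ 2 ∂P = s

section Moments

variable {Ω : Type*} [MeasurableSpace Ω] {P : Measure Ω}

theorem hasFirstTwoMoments_of_hasSum_descFactorial [IsFiniteMeasure P] {X : Ω → ℕ}
    (hX : Measurable X) {m₁ m₂ : ℝ}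
    (h₁ : HasSum (fun n => (n.descFactorial 1 : ℝ) * P.real {ω | X ω = n}) m₁)
    (h₂ : HasSum (fun n => (n.descFactorial 2 : ℝ) * P.real {ω | X ω = n}) m₂) :
    HasFirstTwoMoments (fun ω => (X ω : ℝ)) P m₁ (m₂ + m₁) := by
  simp only [descFactorial_one] at h₁
  have hsq : HasSum (fun n : ℕ => (n : ℝ) ^ 2 * P.real {ω | X ω = n}) (m₂ + m₁) := by
    refine (h₂.add h₁).congr_fun fun n => ?_
    rw [cast_descFactorial_two]
    ring
  have hg₁ : (0 : ℕ → ℝ) ≤ fun n : ℕ => (n : ℝ) := fun n => n.cast_nonneg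
  have hg₂ : (0 : ℕ → ℝ) ≤ fun n : ℕ => (n : ℝ) ^ 2 := fun n => sq_nonneg _
  exact ⟨integrable_comp_of_hasSum hX hg₁ h₁, integrable_comp_of_hasSum hX hg₂ hsq,
    integral_comp_of_hasSum hX hg₁ h₁, integral_comp_of_hasSum hX hg₂ hsq⟩

theorem hasFirstTwoMoments_of_poisson [IsFiniteMeasure P] {X : Ω → ℕ} (hX : Measurable X)
    {lam : ℝ} (hpmf : ∀ n : ℕ, P.real {ω | X ω = n} = Real.exp (-lam) * lam ^ n / n !) :
    HasFirstTwoMoments (fun ω => (X ω : ℝ)) P lam (lam ^ 2 + lam) := by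
  have hmoment (k : ℕ) :
      HasSum (fun n => (n.descFactorial k : ℝ) * P.real {ω | X ω = n}) (lam ^ k) := by
    have h := (hasSum_descFactorial_mul_pow_div_factorial lam k).mul_left (Real.exp (-lam))
    rw [mul_left_comm, ← Real.exp_add, neg_add_cancel, Real.exp_zero, mul_one] at h
    refine h.congr_fun fun n => ?_
    rw [hpmf]
    ring
  simpa using hasFirstTwoMoments_of_hasSum_descFactorial hX (hmoment 1) (hmoment 2)

theorem hasFirstTwoMoments_of_binomial [IsFiniteMeasure P] {X : Ω → ℕ} (hX : Measurable X)
    {μ : ℝ} {n : ℕ}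
    (hpmf : ∀ k : ℕ, P.real {ω | X ω = k}
      = (n.choose k : ℝ) * μ ^ k * (1 - μ) ^ (n - k)) :
    HasFirstTwoMoments (fun ω => (X ω : ℝ)) P (n * μ) (n * (n - 1) * μ ^ 2 + n * μ) := by
  have hmoment (j : ℕ) : HasSum (fun k => (k.descFactorial j : ℝ) * P.real {ω | X ω = k})
      (n.descFactorial j * μ ^ j) := by
    have hvanish (k : ℕ) (hk : k ∉ range (n + 1)) :
        (k.descFactorial j : ℝ) * P.real {ω | X ω = k} = 0 := by
      simp [hpmf, choose_eq_zero_of_lt (by simpa using hk)]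
    have h : HasSum _ _ := hasSum_sum_of_ne_finset_zero hvanish
    rwa [sum_congr rfl fun k _ => by rw [hpmf], sum_descFactorial_mul_choose_mul_pow,
      add_sub_cancel, one_pow, mul_one] at h
  have h := hasFirstTwoMoments_of_hasSum_descFactorial hX (hmoment 1) (hmoment 2)
  rwa [descFactorial_one, pow_one, cast_descFactorial_two] at h

end Moments

namespace HasFirstTwoMoments

variable {Ω : Type*} [MeasurableSpace Ω] {P : Measure Ω} {Y Z : Ω → ℝ} {m s mZ sZ : ℝ}

theorem const_add [IsProbabilityMeasure P] (hY : HasFirstTwoMoments Y P m s) (c : ℝ) :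
    HasFirstTwoMoments (fun ω => c + Y ω) P (c + m) (c ^ 2 + 2 * c * m + s) := by
  have hexpand : (fun ω => (c + Y ω) ^ 2) = fun ω => c ^ 2 + 2 * c * Y ω + Y ω ^ 2 := by
    ext ω; ring
  have hlin : Integrable (fun ω => c ^ 2 + 2 * c * Y ω) P :=
    (integrable_const _).add (hY.integrable.const_mul _)
  refine ⟨(integrable_const c).add hY.integrable, ?_, ?_, ?_⟩
  · rw [hexpand]
    exact hlin.add hY.integrable_sq
  · rw [integral_add (integrable_const c) hY.integrable, integral_const, hY.integral_eq]
    simp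
  · rw [hexpand, integral_add hlin hY.integrable_sq, integral_add (integrable_const _)
      (hY.integrable.const_mul _), integral_const, integral_const_mul, hY.integral_eq,
      hY.integral_sq_eq]
    simp

theorem sub [IsProbabilityMeasure P] (hY : HasFirstTwoMoments Y P m s)
    (hZ : HasFirstTwoMoments Z P mZ sZ) (hind : IndepFun Y Z P) :
    HasFirstTwoMoments (fun ω => Y ω - Z ω) P (m - mZ) (s - 2 * m * mZ + sZ) := by
  have hexpand :
      (fun ω => (Y ω - Z ω) ^ 2) = fun ω => Y ω ^ 2 - 2 * (Y ω * Z ω) + Z ω ^ 2 := by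
    ext ω; ring
  have hprod : Integrable (fun ω => Y ω * Z ω) P :=
    hind.integrable_mul hY.integrable hZ.integrable
  have hprod_eq : ∫ ω, Y ω * Z ω ∂P = m * mZ := by
    rw [hind.integral_fun_mul_eq_mul_integral hY.integrable.aestronglyMeasurable
      hZ.integrable.aestronglyMeasurable, hY.integral_eq, hZ.integral_eq]
  have hcross : Integrable (fun ω => Y ω ^ 2 - 2 * (Y ω * Z ω)) P :=
    hY.integrable_sq.sub (hprod.const_mul 2)
  refine ⟨hY.integrable.sub hZ.integrable, ?_, ?_, ?_⟩
  · rw [hexpand]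
    exact hcross.add hZ.integrable_sq
  · rw [integral_sub hY.integrable hZ.integrable, hY.integral_eq, hZ.integral_eq]
  · rw [hexpand, integral_add hcross hZ.integrable_sq, integral_sub hY.integrable_sq
      (hprod.const_mul 2), integral_const_mul, hprod_eq, hY.integral_sq_eq, hZ.integral_sq_eq]
    ring

theorem integral_mul_add_add_mul_sq_add_sq (hY : HasFirstTwoMoments Y P m s)
    (hZ : HasFirstTwoMoments Z P mZ sZ) (a b : ℝ) :
    ∫ ω, a * (Y ω + Z ω) + b * (Y ω ^ 2 + Z ω ^ 2) ∂P = a * (m + mZ) + b * (s + sZ) := by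
  have hlin : Integrable (fun ω => a * (Y ω + Z ω)) P :=
    (hY.integrable.add hZ.integrable).const_mul a
  have hquad : Integrable (fun ω => b * (Y ω ^ 2 + Z ω ^ 2)) P :=
    (hY.integrable_sq.add hZ.integrable_sq).const_mul b
  rw [integral_add hlin hquad, integral_const_mul, integral_const_mul,
    integral_add hY.integrable hZ.integrable, integral_add hY.integrable_sq hZ.integrable_sq,
    hY.integral_eq, hZ.integral_eq, hY.integral_sq_eq, hZ.integral_sq_eq]

end HasFirstTwoMoments

theorem hasFirstTwoMoments_const_add_poisson_sub_binomial {Ω : Type*} [MeasurableSpace Ω]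
    {P : Measure Ω} [IsProbabilityMeasure P] {A D : Ω → ℕ} (hA : Measurable A)
    (hD : Measurable D) (hind : IndepFun A D P) {lam μ : ℝ} {n : ℕ}
    (hpA : ∀ k : ℕ, P.real {ω | A ω = k} = Real.exp (-lam) * lam ^ k / k !)
    (hpD : ∀ k : ℕ, P.real {ω | D ω = k} = (n.choose k : ℝ) * μ ^ k * (1 - μ) ^ (n - k))
    (c : ℝ) :
    HasFirstTwoMoments (fun ω => c + A ω - D ω) P (c + lam - n * μ)
      ((c + lam - n * μ) ^ 2 + lam + n * μ * (1 - μ)) := by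
  have hcast : Measurable fun k : ℕ => (k : ℝ) := measurable_from_top
  have h := ((hasFirstTwoMoments_of_poisson hA hpA).const_add c).sub
    (hasFirstTwoMoments_of_binomial hD hpD)
    (hind.comp (measurable_const.add hcast) hcast)
  convert h using 1
  ring

theorem stmt_16_general {Ω : Type*} [MeasurableSpace Ω] (P : Measure Ω) [IsProbabilityMeasure P]
    (lam : ℝ) (μ : ℝ)
    (B C β₁ β₃ : ℝ)
    (v : ℝ → ℝ → ℝ) (hv : ∀ u w, v u w = β₁ * (u + w) + β₃ * (u ^ 2 + w ^ 2))
    (x₁ x₂ f : ℕ) (hf : f ≤ x₁)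
    (A₁ A₂ D₁ D₂ A₁' A₂' D₁' D₂' : Ω → ℕ)
    (hmA₁ : Measurable A₁) (hmA₂ : Measurable A₂)
    (hmD₁ : Measurable D₁) (hmD₂ : Measurable D₂)
    (hmA₁' : Measurable A₁') (hmA₂' : Measurable A₂')
    (hmD₁' : Measurable D₁') (hmD₂' : Measurable D₂')
    (hA₁ : ∀ n : ℕ, (P {ω | A₁ ω = n}).toReal = Real.exp (-lam) * lam ^ n / n.factorial)
    (hA₂ : ∀ n : ℕ, (P {ω | A₂ ω = n}).toReal = Real.exp (-lam) * lam ^ n / n.factorial)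
    (hA₁' : ∀ n : ℕ, (P {ω | A₁' ω = n}).toReal = Real.exp (-lam) * lam ^ n / n.factorial)
    (hA₂' : ∀ n : ℕ, (P {ω | A₂' ω = n}).toReal = Real.exp (-lam) * lam ^ n / n.factorial)
    (hD₁ : ∀ k : ℕ, (P {ω | D₁ ω = k}).toReal
      = ((x₁ - f).choose k : ℝ) * μ ^ k * (1 - μ) ^ (x₁ - f - k))
    (hD₂ : ∀ k : ℕ, (P {ω | D₂ ω = k}).toReal
      = ((x₂ + f).choose k : ℝ) * μ ^ k * (1 - μ) ^ (x₂ + f - k))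
    (hD₁' : ∀ k : ℕ, (P {ω | D₁' ω = k}).toReal
      = (x₁.choose k : ℝ) * μ ^ k * (1 - μ) ^ (x₁ - k))
    (hD₂' : ∀ k : ℕ, (P {ω | D₂' ω = k}).toReal
      = (x₂.choose k : ℝ) * μ ^ k * (1 - μ) ^ (x₂ - k))
    (hindep : ProbabilityTheory.iIndepFun
      ![A₁, A₂, D₁, D₂] P)
    (hindep' : ProbabilityTheory.iIndepFun
      ![A₁', A₂', D₁', D₂'] P) :
    ((B - C) * f
        + ∫ ω, v ((x₁ : ℝ) - f + A₁ ω - D₁ ω) ((x₂ : ℝ) + f + A₂ ω - D₂ ω) ∂P)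
      - ((B - C) * (0 : ℕ)
        + ∫ ω, v ((x₁ : ℝ) + A₁' ω - D₁' ω) ((x₂ : ℝ) + A₂' ω - D₂' ω) ∂P)
    = (B - C) * f + β₃ * (1 - μ) ^ 2 * (2 * (f : ℝ) ^ 2 - 2 * ((x₁ : ℝ) - x₂) * f) := by
  have hpool₁ := hasFirstTwoMoments_const_add_poisson_sub_binomial hmA₁ hmD₁
    (hindep.indepFun (show (0 : Fin 4) ≠ 2 by decide)) hA₁ hD₁ ((x₁ : ℝ) - f)
  have hpool₂ := hasFirstTwoMoments_const_add_poisson_sub_binomial hmA₂ hmD₂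
    (hindep.indepFun (show (1 : Fin 4) ≠ 3 by decide)) hA₂ hD₂ ((x₂ : ℝ) + f)
  have hpool₁' := hasFirstTwoMoments_const_add_poisson_sub_binomial hmA₁' hmD₁'
    (hindep'.indepFun (show (0 : Fin 4) ≠ 2 by decide)) hA₁' hD₁' (x₁ : ℝ)
  have hpool₂' := hasFirstTwoMoments_const_add_poisson_sub_binomial hmA₂' hmD₂'
    (hindep'.indepFun (show (1 : Fin 4) ≠ 3 by decide)) hA₂' hD₂' (x₂ : ℝ)
  simp only [hv]
  rw [hpool₁.integral_mul_add_add_mul_sq_add_sq hpool₂,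
    hpool₁'.integral_mul_add_add_mul_sq_add_sq hpool₂', Nat.cast_sub hf, Nat.cast_add]
  ring

/-- In the symmetric two-pool midnight model with approximate value function
`v̂(u,w) = β̂₁(u+w) + β̂₃(u²+w²)`, the approximate objective
`G(f) = (B−C)f + E[v̂(x₁ − f + A₁ − D₁, x₂ + f + A₂ − D₂)]`
(with `A₁, A₂ ∼ Poisson(lam)`, `D₁ ∼ Bin(x₁−f, μ)`, `D₂ ∼ Bin(x₂+f, μ)` mutually
independent, and `G(0)` defined with its own such random variables) satisfies, for every
`0 ≤ f ≤ x₁`,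
`G(f) − G(0) = (B−C)f + β̂₃(1−μ)²(2f² − 2(x₁−x₂)f)`. -/
theorem stmt_16 {Ω : Type*} [MeasurableSpace Ω] (P : Measure Ω) [IsProbabilityMeasure P]
    (lam : ℝ) (hlam : 0 < lam) (μ : ℝ) (hμ0 : 0 ≤ μ) (hμ1 : μ ≤ 1)
    (B C β₁ β₃ : ℝ)
    (v : ℝ → ℝ → ℝ) (hv : ∀ u w, v u w = β₁ * (u + w) + β₃ * (u ^ 2 + w ^ 2))
    (x₁ x₂ f : ℕ) (hf : f ≤ x₁)
    (A₁ A₂ D₁ D₂ A₁' A₂' D₁' D₂' : Ω → ℕ)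
    (hmA₁ : Measurable A₁) (hmA₂ : Measurable A₂)
    (hmD₁ : Measurable D₁) (hmD₂ : Measurable D₂)
    (hmA₁' : Measurable A₁') (hmA₂' : Measurable A₂')
    (hmD₁' : Measurable D₁') (hmD₂' : Measurable D₂')
    (hA₁ : ∀ n : ℕ, (P {ω | A₁ ω = n}).toReal = Real.exp (-lam) * lam ^ n / n.factorial)
    (hA₂ : ∀ n : ℕ, (P {ω | A₂ ω = n}).toReal = Real.exp (-lam) * lam ^ n / n.factorial)
    (hA₁' : ∀ n : ℕ, (P {ω | A₁' ω = n}).toReal = Real.exp (-lam) * lam ^ n / n.factorial)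
    (hA₂' : ∀ n : ℕ, (P {ω | A₂' ω = n}).toReal = Real.exp (-lam) * lam ^ n / n.factorial)
    (hD₁ : ∀ k : ℕ, (P {ω | D₁ ω = k}).toReal
      = ((x₁ - f).choose k : ℝ) * μ ^ k * (1 - μ) ^ (x₁ - f - k))
    (hD₂ : ∀ k : ℕ, (P {ω | D₂ ω = k}).toReal
      = ((x₂ + f).choose k : ℝ) * μ ^ k * (1 - μ) ^ (x₂ + f - k))
    (hD₁' : ∀ k : ℕ, (P {ω | D₁' ω = k}).toReal
      = (x₁.choose k : ℝ) * μ ^ k * (1 - μ) ^ (x₁ - k))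
    (hD₂' : ∀ k : ℕ, (P {ω | D₂' ω = k}).toReal
      = (x₂.choose k : ℝ) * μ ^ k * (1 - μ) ^ (x₂ - k))
    (hindep : ProbabilityTheory.iIndepFun
      ![A₁, A₂, D₁, D₂] P)
    (hindep' : ProbabilityTheory.iIndepFun
      ![A₁', A₂', D₁', D₂'] P) :
    ((B - C) * f
        + ∫ ω, v ((x₁ : ℝ) - f + A₁ ω - D₁ ω) ((x₂ : ℝ) + f + A₂ ω - D₂ ω) ∂P)
      - ((B - C) * (0 : ℕ)
        + ∫ ω, v ((x₁ : ℝ) + A₁' ω - D₁' ω) ((x₂ : ℝ) + A₂' ω - D₂' ω) ∂P)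
    = (B - C) * f + β₃ * (1 - μ) ^ 2 * (2 * (f : ℝ) ^ 2 - 2 * ((x₁ : ℝ) - x₂) * f) :=
  stmt_16_general P lam μ B C β₁ β₃ v hv x₁ x₂ f hf A₁ A₂ D₁ D₂ A₁' A₂' D₁' D₂' hmA₁ hmA₂ hmD₁ hmD₂
    hmA₁' hmA₂' hmD₁' hmD₂' hA₁ hA₂ hA₁' hA₂' hD₁ hD₂ hD₁' hD₂' hindep hindep'
end

section
/- Assume: V(s) ≥ 1 for all s; the drift condition Σ_{s'} P̃η(s,s') V(s') ≤ b V(s) + d·1_C(s) holds for all s ∈ S with b ∈ (0,1), d ≥ 0 and C ⊆ S; vη satisfies the Poisson equation vη(s) = g̃η(s) − γη + Σ_{s'} P̃η(s,s') vη(s') for all s, with ‖vη‖_{∞,V} < ∞; and g̃(s,f) ≥ 0 with g̃η(s) ≤ V(s) for all s and f ∈ A(s). Then |N₁| ≤ (Σ_s μη(s) V(s)) · ‖r−1‖∞ · ((b+d)‖vη‖_{∞,V} + 1) and |N₂| ≤ ‖μθ − μη‖_{1,V} · ‖r−1‖∞ · ((b+d)‖vη‖_{∞,V} + 1). (Explicit-constant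 form of the decay rates in Proposition 1: N₁ = O(‖r−1‖∞), and N₂ = O(‖r−1‖∞²) once ‖μθ − μη‖_{1,V} = O(‖r−1‖∞).) -/
/-!
Subtracting the Poisson equation for `vη` from the definition of `Ñ` leaves, state by state,
`Ñ(s) = Σ_f (πθ − πη)(f|s) (g̃(s,f) + Σ_{s'} p̃(s'|s,f) vη(s'))` with `πθ − πη = πη (r − 1)`.
Weighted by `πη(f|s)`, the bracket is at most `g̃η(s) + ‖vη‖_{∞,V} Σ_{s'} P̃η(s,s') V(s')`, which
the drift condition bounds by `((b+d)‖vη‖_{∞,V} + 1) V(s)`. Hence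
`|Ñ(s)| ≤ ‖r−1‖_∞ ((b+d)‖vη‖_{∞,V} + 1) V(s)`, and summing against `μη` or `μθ − μη` gives
both estimates.
-/

open Finset
open scoped ENNReal

lemma abs_le_toReal_iSup_div_mul {S : Type*} {v V : S → ℝ} (hV : ∀ s, 0 < V s)
    (hfin : (⨆ s, ENNReal.ofReal (|v s| / V s)) ≠ ⊤) (s : S) :
    |v s| ≤ (⨆ s, ENNReal.ofReal (|v s| / V s)).toReal * V s := by
  have h := ENNReal.toReal_mono hfin (le_iSup (fun s => ENNReal.ofReal (|v s| / V s)) s)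
  rw [ENNReal.toReal_ofReal (div_nonneg (abs_nonneg _) (hV s).le)] at h
  exact (div_le_iff₀ (hV s)).mp h

section WeightedTsum

variable {S : Type*} {q v V : S → ℝ} {M : ℝ}

lemma summable_mul_of_abs_le_mul (hq : ∀ s, 0 ≤ q s) (hqV : Summable fun s => q s * V s)
    (hv : ∀ s, |v s| ≤ M * V s) : Summable fun s => q s * v s := by
  refine (hqV.mul_left M).of_norm_bounded fun s => ?_
  rw [Real.norm_eq_abs, abs_mul, abs_of_nonneg (hq s), mul_left_comm]
  exact mul_le_mul_of_nonneg_left (hv s) (hq s)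

lemma abs_tsum_mul_le_mul_tsum (hq : ∀ s, 0 ≤ q s) (hqV : Summable fun s => q s * V s)
    (hv : ∀ s, |v s| ≤ M * V s) : |∑' s, q s * v s| ≤ M * ∑' s, q s * V s := by
  rw [← tsum_mul_left]
  refine tsum_of_norm_bounded (f := fun s => q s * v s) (hqV.mul_left M).hasSum fun s => ?_
  rw [Real.norm_eq_abs, abs_mul, abs_of_nonneg (hq s), mul_left_comm]
  exact mul_le_mul_of_nonneg_left (hv s) (hq s)

end WeightedTsum

section Mixture

variable {S F : Type*} {A : Finset F} {π : F → ℝ} {p : F → S → ℝ} {V : S → ℝ}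

lemma mul_le_mixture_mul (hπ : ∀ f ∈ A, 0 ≤ π f) (hp : ∀ f s, 0 ≤ p f s) (hV : ∀ s, 0 ≤ V s)
    {f : F} (hf : f ∈ A) (s : S) :
    π f * (p f s * V s) ≤ (∑ f ∈ A, π f * p f s) * V s := by
  rw [← mul_assoc]
  exact mul_le_mul_of_nonneg_right
    (single_le_sum (fun f hf => mul_nonneg (hπ f hf) (hp f s)) hf) (hV s)

lemma summable_of_summable_mixture (hπ : ∀ f ∈ A, 0 < π f) (hp : ∀ f s, 0 ≤ p f s)
    (hV : ∀ s, 0 ≤ V s) (hsum : Summable fun s => (∑ f ∈ A, π f * p f s) * V s)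
    {f : F} (hf : f ∈ A) : Summable fun s => p f s * V s := by
  refine (summable_mul_left_iff (hπ f hf).ne').mp (hsum.of_nonneg_of_le (fun s => ?_)
    (mul_le_mixture_mul (fun f hf => (hπ f hf).le) hp hV hf))
  exact mul_nonneg (hπ f hf).le (mul_nonneg (hp f s) (hV s))

lemma mul_tsum_le_tsum_mixture (hπ : ∀ f ∈ A, 0 < π f) (hp : ∀ f s, 0 ≤ p f s)
    (hV : ∀ s, 0 ≤ V s) (hsum : Summable fun s => (∑ f ∈ A, π f * p f s) * V s)
    {f : F} (hf : f ∈ A) :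
    π f * ∑' s, p f s * V s ≤ ∑' s, (∑ f ∈ A, π f * p f s) * V s := by
  rw [← tsum_mul_left]
  exact Summable.tsum_le_tsum (mul_le_mixture_mul (fun f hf => (hπ f hf).le) hp hV hf)
    ((summable_of_summable_mixture hπ hp hV hsum hf).mul_left _) hsum

lemma tsum_mixture_mul {v : S → ℝ} (hsum : ∀ f ∈ A, Summable fun s => p f s * v s) :
    ∑' s, (∑ f ∈ A, π f * p f s) * v s = ∑ f ∈ A, π f * ∑' s, p f s * v s := by
  simp_rw [sum_mul, mul_assoc]
  rw [Summable.tsum_finsetSum fun f hf => (hsum f hf).mul_left _]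
  simp_rw [tsum_mul_left]

end Mixture

section PolicyDefect

variable {S F : Type*} {A : Finset F} {πθ πη g : F → ℝ} {p : F → S → ℝ} {v V : S → ℝ}

lemma abs_sum_sub_mul_le {c : F → ℝ} {B : ℝ} (hπη : ∀ f ∈ A, 0 < πη f)
    (hc : ∀ f ∈ A, πη f * |c f| ≤ B) :
    |∑ f ∈ A, (πθ f - πη f) * c f| ≤ (∑ f ∈ A, |πθ f / πη f - 1|) * B := by
  rw [sum_mul]
  refine (abs_sum_le_sum_abs _ _).trans (sum_le_sum fun f hf => ?_)
  have hπ := hπη f hf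
  calc |(πθ f - πη f) * c f| = |πθ f / πη f - 1| * (πη f * |c f|) := by
        rw [show πθ f - πη f = πη f * (πθ f / πη f - 1) by field_simp, abs_mul, abs_mul,
          abs_of_pos hπ]
        ring
    _ ≤ |πθ f / πη f - 1| * B := mul_le_mul_of_nonneg_left (hc f hf) (abs_nonneg _)

lemma poisson_defect_eq {γ vs : ℝ} (hsum : ∀ f ∈ A, Summable fun s => p f s * v s)
    (hpoisson : vs = ∑ f ∈ A, πη f * g f - γ + ∑' s, (∑ f ∈ A, πη f * p f s) * v s) :
    ∑ f ∈ A, πθ f * g f - γ + ∑' s, (∑ f ∈ A, πθ f * p f s) * v s - vs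
      = ∑ f ∈ A, (πθ f - πη f) * (g f + ∑' s, p f s * v s) := by
  rw [hpoisson, tsum_mixture_mul hsum, tsum_mixture_mul hsum]
  simp only [sub_mul, mul_add, sum_add_distrib, sum_sub_distrib]
  ring

variable {M c Vs : ℝ} (hπη : ∀ f ∈ A, 0 < πη f) (hp : ∀ f s, 0 ≤ p f s)
  (hg : ∀ f ∈ A, 0 ≤ g f) (hV : ∀ s, 0 ≤ V s) (hv : ∀ s, |v s| ≤ M * V s) (hM : 0 ≤ M)
  (hsum : Summable fun s => (∑ f ∈ A, πη f * p f s) * V s)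
  (hdrift : ∑' s, (∑ f ∈ A, πη f * p f s) * V s ≤ c * Vs)
  (hgV : ∑ f ∈ A, πη f * g f ≤ Vs)
include hπη hp hg hV hv hM hsum hdrift hgV

lemma mul_abs_cost_add_tsum_le {f : F} (hf : f ∈ A) :
    πη f * |g f + ∑' s, p f s * v s| ≤ (c * M + 1) * Vs := by
  have hπ := (hπη f hf).le
  have hcost : πη f * g f ≤ Vs :=
    (single_le_sum (fun f hf => mul_nonneg (hπη f hf).le (hg f hf)) hf).trans hgV
  have hnext : πη f * |∑' s, p f s * v s| ≤ c * M * Vs := calc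
    _ ≤ πη f * (M * ∑' s, p f s * V s) := mul_le_mul_of_nonneg_left
          (abs_tsum_mul_le_mul_tsum (hp f) (summable_of_summable_mixture hπη hp hV hsum hf) hv) hπ
    _ = M * (πη f * ∑' s, p f s * V s) := by ring
    _ ≤ M * (c * Vs) := mul_le_mul_of_nonneg_left
          ((mul_tsum_le_tsum_mixture hπη hp hV hsum hf).trans hdrift) hM
    _ = c * M * Vs := by ring
  calc πη f * |g f + ∑' s, p f s * v s| ≤ πη f * (g f + |∑' s, p f s * v s|) := by
        refine mul_le_mul_of_nonneg_left ((abs_add_le _ _).trans_eq ?_) hπ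
        rw [abs_of_nonneg (hg f hf)]
    _ ≤ (c * M + 1) * Vs := by linarith

lemma abs_poisson_defect_le {γ vs : ℝ}
    (hpoisson : vs = ∑ f ∈ A, πη f * g f - γ + ∑' s, (∑ f ∈ A, πη f * p f s) * v s) :
    |∑ f ∈ A, πθ f * g f - γ + ∑' s, (∑ f ∈ A, πθ f * p f s) * v s - vs|
      ≤ (∑ f ∈ A, |πθ f / πη f - 1|) * ((c * M + 1) * Vs) := by
  have hpv : ∀ f ∈ A, Summable fun s => p f s * v s := fun f hf =>
    summable_mul_of_abs_le_mul (hp f) (summable_of_summable_mixture hπη hp hV hsum hf) hv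
  rw [poisson_defect_eq hpv hpoisson]
  exact abs_sum_sub_mul_le hπη fun f hf =>
    mul_abs_cost_add_tsum_le hπη hp hg hV hv hM hsum hdrift hgV hf

end PolicyDefect

lemma ofReal_le_ofReal_mul_of_le {x R c V : ℝ} {R' M : ℝ≥0∞} (hM : M ≠ ⊤) (hR : 0 ≤ R)
    (hRR' : ENNReal.ofReal R ≤ R') (hc : 0 ≤ c) (hx : x ≤ R * ((c * M.toReal + 1) * V)) :
    ENNReal.ofReal x ≤ ENNReal.ofReal V * (R' * (ENNReal.ofReal c * M + 1)) := calc
  ENNReal.ofReal x ≤ ENNReal.ofReal (R * ((c * M.toReal + 1) * V)) := ENNReal.ofReal_le_ofReal hx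
  _ = ENNReal.ofReal V * (ENNReal.ofReal R * (ENNReal.ofReal c * M + 1)) := by
    rw [ENNReal.ofReal_mul hR, ENNReal.ofReal_mul (by positivity),
      ENNReal.ofReal_add (by positivity) zero_le_one, ENNReal.ofReal_mul hc,
      ENNReal.ofReal_toReal hM, ENNReal.ofReal_one]
    ring
  _ ≤ _ := by gcongr

lemma ofReal_abs_tsum_mul_le {S : Type*} {N V : S → ℝ} {K : ℝ≥0∞}
    (hN : ∀ s, ENNReal.ofReal |N s| ≤ ENNReal.ofReal (V s) * K) (w : S → ℝ) :
    ENNReal.ofReal |∑' s, w s * N s| ≤ (∑' s, ENNReal.ofReal (|w s| * V s)) * K := by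
  rw [← Real.enorm_eq_ofReal_abs, ← ENNReal.tsum_mul_right]
  refine tsum_of_enorm_bounded ENNReal.summable.hasSum fun s => ?_
  rw [Real.enorm_eq_ofReal_abs, abs_mul, ENNReal.ofReal_mul (abs_nonneg _),
    ENNReal.ofReal_mul (abs_nonneg _), mul_assoc]
  gcongr
  exact hN s

theorem stmt_17_general {S F : Type*}
    (A : S → Finset F)
    (πθ πη : S → F → ℝ)
    (hπη0 : ∀ s, ∀ f ∈ A s, 0 < πη s f)
    (r : S → F → ℝ) (hr : ∀ s f, r s f = πθ s f / πη s f)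
    (p : S → F → S → ℝ) (hp0 : ∀ s f s', 0 ≤ p s f s')
    (g : S → F → ℝ) (hg0 : ∀ s, ∀ f ∈ A s, 0 ≤ g s f)
    (μθ μη : S → ℝ)
    (hμη0 : ∀ s, 0 ≤ μη s)
    (vη : S → ℝ)
    (Pθ Pη : S → S → ℝ)
    (hPθ : ∀ s s', Pθ s s' = ∑ f ∈ A s, πθ s f * p s f s')
    (hPη : ∀ s s', Pη s s' = ∑ f ∈ A s, πη s f * p s f s')
    (gθ gη : S → ℝ)
    (hgθ : ∀ s, gθ s = ∑ f ∈ A s, πθ s f * g s f)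
    (hgη : ∀ s, gη s = ∑ f ∈ A s, πη s f * g s f)
    (γη : ℝ)
    (N : S → ℝ)
    (hN : ∀ s, N s = gθ s - γη + (∑' s', Pθ s s' * vη s') - vη s)
    (V : S → ℝ) (hV : ∀ s, 1 ≤ V s)
    (b d : ℝ) (hb0 : 0 < b) (hd : 0 ≤ d) (C : Set S)
    (hdriftSummable : ∀ s, Summable fun s' => Pη s s' * V s')
    (hdrift : ∀ s, ∑' s', Pη s s' * V s' ≤ b * V s + d * C.indicator (fun _ => (1 : ℝ)) s)
    (hPoisson : ∀ s, vη s = gη s - γη + ∑' s', Pη s s' * vη s')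
    (hvfin : (⨆ s, ENNReal.ofReal (|vη s| / V s)) ≠ ⊤)
    (hgV : ∀ s, gη s ≤ V s) :
    ENNReal.ofReal |∑' s, μη s * N s|
        ≤ (∑' s, ENNReal.ofReal (μη s * V s))
          * ((⨆ s, ENNReal.ofReal (∑ f ∈ A s, |r s f - 1|))
            * (ENNReal.ofReal (b + d) * (⨆ s, ENNReal.ofReal (|vη s| / V s)) + 1))
    ∧ ENNReal.ofReal |∑' s, (μθ s - μη s) * N s|
        ≤ (∑' s, ENNReal.ofReal (|μθ s - μη s| * V s))
          * ((⨆ s, ENNReal.ofReal (∑ f ∈ A s, |r s f - 1|))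
            * (ENNReal.ofReal (b + d) * (⨆ s, ENNReal.ofReal (|vη s| / V s)) + 1)) := by
  obtain rfl : r = fun s f => πθ s f / πη s f := funext₂ hr
  obtain rfl : Pθ = fun s s' => ∑ f ∈ A s, πθ s f * p s f s' := funext₂ hPθ
  obtain rfl : Pη = fun s s' => ∑ f ∈ A s, πη s f * p s f s' := funext₂ hPη
  obtain rfl : gθ = fun s => ∑ f ∈ A s, πθ s f * g s f := funext hgθ
  obtain rfl : gη = fun s => ∑ f ∈ A s, πη s f * g s f := funext hgη
  have hVpos : ∀ s, 0 < V s := fun s => one_pos.trans_le (hV s)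
  have hdrift_le : ∀ s, ∑' s', (∑ f ∈ A s, πη s f * p s f s') * V s' ≤ (b + d) * V s := by
    intro s
    refine (hdrift s).trans ?_
    rw [add_mul]
    gcongr
    exact (Set.indicator_le_self' (fun _ _ => zero_le_one) s).trans (hV s)
  have hNle : ∀ s, ENNReal.ofReal |N s| ≤ ENNReal.ofReal (V s) *
      ((⨆ s, ENNReal.ofReal (∑ f ∈ A s, |πθ s f / πη s f - 1|))
        * (ENNReal.ofReal (b + d) * (⨆ s, ENNReal.ofReal (|vη s| / V s)) + 1)) := fun s =>
    hN s ▸ ofReal_le_ofReal_mul_of_le hvfin (sum_nonneg fun _ _ => abs_nonneg _)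
      (le_iSup (fun s => ENNReal.ofReal (∑ f ∈ A s, |πθ s f / πη s f - 1|)) s) (by linarith)
      (abs_poisson_defect_le (hπη0 s) (hp0 s) (hg0 s) (fun s => (hVpos s).le)
        (abs_le_toReal_iSup_div_mul hVpos hvfin) ENNReal.toReal_nonneg (hdriftSummable s)
        (hdrift_le s) (hgV s) (hPoisson s))
  refine ⟨?_, ofReal_abs_tsum_mul_le hNle _⟩
  simpa only [abs_of_nonneg (hμη0 _)] using ofReal_abs_tsum_mul_le hNle μη

/-- **Explicit-constant form of the decay rates in Proposition 1.** Under `V ≥ 1`, the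
drift condition for `P̃η`, the Poisson equation for `vη` with `‖vη‖_{∞,V} < ∞`, and
nonnegative one-day costs with `g̃η ≤ V`, one has
`|N₁| ≤ (∑ μη V) · ‖r−1‖_∞ · ((b+d)‖vη‖_{∞,V} + 1)` and
`|N₂| ≤ ‖μθ − μη‖_{1,V} · ‖r−1‖_∞ · ((b+d)‖vη‖_{∞,V} + 1)`
(right-hand sides evaluated in `ℝ≥0∞`). -/
theorem stmt_17 {S F : Type*} [Countable S]
    (A : S → Finset F) (hA : ∀ s, (A s).Nonempty)
    (πθ πη : S → F → ℝ)
    (hπθ0 : ∀ s, ∀ f ∈ A s, 0 ≤ πθ s f) (hπθ1 : ∀ s, ∑ f ∈ A s, πθ s f = 1)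
    (hπη0 : ∀ s, ∀ f ∈ A s, 0 < πη s f) (hπη1 : ∀ s, ∑ f ∈ A s, πη s f = 1)
    (r : S → F → ℝ) (hr : ∀ s f, r s f = πθ s f / πη s f)
    (p : S → F → S → ℝ) (hp0 : ∀ s f s', 0 ≤ p s f s') (hp1 : ∀ s f, ∑' s', p s f s' = 1)
    (g : S → F → ℝ) (hg0 : ∀ s, ∀ f ∈ A s, 0 ≤ g s f)
    (μθ μη : S → ℝ)
    (hμθ0 : ∀ s, 0 ≤ μθ s) (hμθ1 : ∑' s, μθ s = 1)
    (hμη0 : ∀ s, 0 ≤ μη s) (hμη1 : ∑' s, μη s = 1)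
    (vη : S → ℝ)
    (Pθ Pη : S → S → ℝ)
    (hPθ : ∀ s s', Pθ s s' = ∑ f ∈ A s, πθ s f * p s f s')
    (hPη : ∀ s s', Pη s s' = ∑ f ∈ A s, πη s f * p s f s')
    (gθ gη : S → ℝ)
    (hgθ : ∀ s, gθ s = ∑ f ∈ A s, πθ s f * g s f)
    (hgη : ∀ s, gη s = ∑ f ∈ A s, πη s f * g s f)
    (γη : ℝ) (hγη : γη = ∑' s, μη s * gη s)
    (N : S → ℝ)
    (hN : ∀ s, N s = gθ s - γη + (∑' s', Pθ s s' * vη s') - vη s)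
    (V : S → ℝ) (hV : ∀ s, 1 ≤ V s)
    (b d : ℝ) (hb0 : 0 < b) (hb1 : b < 1) (hd : 0 ≤ d) (C : Set S)
    (hdriftSummable : ∀ s, Summable fun s' => Pη s s' * V s')
    (hdrift : ∀ s, ∑' s', Pη s s' * V s' ≤ b * V s + d * C.indicator (fun _ => (1 : ℝ)) s)
    (hsumθ : ∀ s, Summable fun s' => Pθ s s' * vη s')
    (hsumη : ∀ s, Summable fun s' => Pη s s' * vη s')
    (hPoisson : ∀ s, vη s = gη s - γη + ∑' s', Pη s s' * vη s')
    (hvfin : (⨆ s, ENNReal.ofReal (|vη s| / V s)) ≠ ⊤)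
    (hgV : ∀ s, gη s ≤ V s) :
    ENNReal.ofReal |∑' s, μη s * N s|
        ≤ (∑' s, ENNReal.ofReal (μη s * V s))
          * ((⨆ s, ENNReal.ofReal (∑ f ∈ A s, |r s f - 1|))
            * (ENNReal.ofReal (b + d) * (⨆ s, ENNReal.ofReal (|vη s| / V s)) + 1))
    ∧ ENNReal.ofReal |∑' s, (μθ s - μη s) * N s|
        ≤ (∑' s, ENNReal.ofReal (|μθ s - μη s| * V s))
          * ((⨆ s, ENNReal.ofReal (∑ f ∈ A s, |r s f - 1|))
            * (ENNReal.ofReal (b + d) * (⨆ s, ENNReal.ofReal (|vη s| / V s)) + 1)) :=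
  stmt_17_general A πθ πη hπη0 r hr p hp0 g hg0 μθ μη hμη0 vη Pθ Pη hPθ hPη gθ gη hgθ hgη γη N hN V
    hV b d hb0 hd C hdriftSummable hdrift hPoisson hvfin hgV
end
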